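/- Under the hypotheses of the previous lemma, if additionally the proximity condition x_kᵢ s_kᵢ ≥ γ μ_k holds for all i and μ_k ≥ C_μ > 0, then min_i min(x_kᵢ, s_kᵢ) ≥ γ C_μ / C_max, where C_max = max(2n μ_0 / min_j s_0ʲ, 2n μ_0 / min_j x_0ʲ). -/

import Mathlib

/-!
Feasibility of both iterates puts `x₀ - x_k` in `ker A` and `s₀ - s_k` in `range Aᵀ`, so the two
differences are orthogonal and `x₀ ⬝ s_k + x_k ⬝ s₀ = x₀ ⬝ s₀ + x_k ⬝ s_k ≤ 2 n μ₀`. All terms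
being nonnegative, `x_kᵢ · min s₀ ≤ x_k ⬝ s₀ ≤ 2 n μ₀`, so `x_kᵢ ≤ C_max`, and likewise
`s_kᵢ ≤ C_max`. Hence `γ C_μ ≤ γ μ_k ≤ x_kᵢ s_kᵢ ≤ min (x_kᵢ, s_kᵢ) · C_max`.
-/

open Finset Matrix

section Feasibility

variable {R m n : Type*} [CommRing R] [Fintype m] [Fintype n] (A : Matrix m n R)
  {b : m → R} {c x x' s s' : n → R} {y y' : m → R}

theorem Matrix.dotProduct_sub_eq_zero_of_feasible (hx : A *ᵥ x = b) (hx' : A *ᵥ x' = b)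
    (hs : Aᵀ *ᵥ y + s = c) (hs' : Aᵀ *ᵥ y' + s' = c) : (x - x') ⬝ᵥ (s - s') = 0 := by
  have hker : A *ᵥ (x - x') = 0 := by rw [mulVec_sub, hx, hx', sub_self]
  have hrange : s - s' = Aᵀ *ᵥ (y' - y) :=
    calc s - s' = (Aᵀ *ᵥ y + s) - (Aᵀ *ᵥ y' + s') + (Aᵀ *ᵥ y' - Aᵀ *ᵥ y) := by abel
      _ = Aᵀ *ᵥ (y' - y) := by rw [hs, hs', sub_self, zero_add, mulVec_sub]
  rw [hrange, dotProduct_mulVec, vecMul_transpose, hker, zero_dotProduct]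

theorem Matrix.dotProduct_add_dotProduct_eq_of_feasible (hx : A *ᵥ x = b) (hx' : A *ᵥ x' = b)
    (hs : Aᵀ *ᵥ y + s = c) (hs' : Aᵀ *ᵥ y' + s' = c) :
    x ⬝ᵥ s' + x' ⬝ᵥ s = x ⬝ᵥ s + x' ⬝ᵥ s' := by
  have h := dotProduct_sub_eq_zero_of_feasible A hx hx' hs hs'
  rw [sub_dotProduct, dotProduct_sub, dotProduct_sub] at h
  linear_combination -h

end Feasibility

section Coordinates

variable {R n : Type*} [Field R] [LinearOrder R] [IsStrictOrderedRing R] [Fintype n]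

theorem mul_le_dotProduct_of_nonneg {u v : n → R} (hu : 0 ≤ u) (hv : 0 ≤ v) (i : n) :
    u i * v i ≤ u ⬝ᵥ v :=
  single_le_sum (fun j _ => mul_nonneg (hu j) (hv j)) (mem_univ i)

theorem le_div_inf'_of_dotProduct_le [Nonempty n] {u v : n → R} {B : R} (hu : 0 ≤ u)
    (hv : ∀ j, 0 < v j) (h : u ⬝ᵥ v ≤ B) (i : n) : u i ≤ B / univ.inf' univ_nonempty v := by
  have hmin : 0 < univ.inf' univ_nonempty v := (lt_inf'_iff _).2 fun j _ => hv j
  rw [le_div_iff₀ hmin]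
  calc u i * univ.inf' univ_nonempty v ≤ u i * v i :=
        mul_le_mul_of_nonneg_left (inf'_le _ (mem_univ i)) (hu i)
    _ ≤ u ⬝ᵥ v := mul_le_dotProduct_of_nonneg hu (fun j => (hv j).le) i
    _ ≤ B := h

theorem div_le_min_of_mul_le {a b C p : R} (ha : 0 < a) (hb : 0 ≤ b) (haC : a ≤ C) (hbC : b ≤ C)
    (hp : p ≤ a * b) : p / C ≤ min a b := by
  have hC : 0 < C := ha.trans_le haC
  refine le_min ((div_le_iff₀ hC).2 ?_) ((div_le_iff₀ hC).2 ?_)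
  · calc p ≤ a * b := hp
      _ ≤ a * C := mul_le_mul_of_nonneg_left hbC ha.le
  · calc p ≤ a * b := hp
      _ ≤ C * b := mul_le_mul_of_nonneg_right haC hb
      _ = b * C := mul_comm _ _

end Coordinates

theorem lp_iterates_lower_bound_general {m n : ℕ} [NeZero n] (A : Matrix (Fin m) (Fin n) ℝ)
    (b : Fin m → ℝ) (c : Fin n → ℝ)
    (x0 xk s0 sk : Fin n → ℝ) (y0 yk : Fin m → ℝ) (μ0 μk γ Cμ Cmax : ℝ)
    (h0pos : ∀ i, 0 < x0 i ∧ 0 < s0 i) (hkpos : ∀ i, 0 < xk i ∧ 0 < sk i)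
    (hp0 : A.mulVec x0 = b) (hd0 : A.transpose.mulVec y0 + s0 = c)
    (hpk : A.mulVec xk = b) (hdk : A.transpose.mulVec yk + sk = c)
    (hμ0 : μ0 = dotProduct x0 s0 / n)
    (hμk : μk = dotProduct xk sk / n)
    (hle : μk ≤ μ0)
    (hγ : 0 < γ ∧ γ < 1)
    (hprox : ∀ i, γ * μk ≤ xk i * sk i)
    (hμlb : Cμ ≤ μk)
    (hCmax : Cmax = max (2 * n * μ0 / Finset.univ.inf' Finset.univ_nonempty s0)
      (2 * n * μ0 / Finset.univ.inf' Finset.univ_nonempty x0)) :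
    ∀ i, γ * Cμ / Cmax ≤ min (xk i) (sk i) := by
  intro i
  have hn : (n : ℝ) ≠ 0 := Nat.cast_ne_zero.2 (NeZero.ne n)
  have hx0 : 0 ≤ x0 := fun j => (h0pos j).1.le
  have hs0 : 0 ≤ s0 := fun j => (h0pos j).2.le
  have hxk : 0 ≤ xk := fun j => (hkpos j).1.le
  have hsk : 0 ≤ sk := fun j => (hkpos j).2.le
  have hcross : x0 ⬝ᵥ sk + xk ⬝ᵥ s0 ≤ 2 * n * μ0 := by
    have hx0s0 : x0 ⬝ᵥ s0 = n * μ0 := by rw [hμ0, mul_div_cancel₀ _ hn]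
    have hxksk : xk ⬝ᵥ sk = n * μk := by rw [hμk, mul_div_cancel₀ _ hn]
    rw [dotProduct_add_dotProduct_eq_of_feasible A hp0 hpk hd0 hdk, hx0s0, hxksk]
    linarith [mul_le_mul_of_nonneg_left hle n.cast_nonneg]
  have hxkC : xk i ≤ Cmax := hCmax ▸ (le_div_inf'_of_dotProduct_le hxk (fun j => (h0pos j).2)
    (by linarith [dotProduct_nonneg_of_nonneg hx0 hsk]) i).trans (le_max_left _ _)
  have hskC : sk i ≤ Cmax := hCmax ▸ (le_div_inf'_of_dotProduct_le hsk (fun j => (h0pos j).1)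
    (by rw [dotProduct_comm]; linarith [dotProduct_nonneg_of_nonneg hxk hs0]) i).trans
      (le_max_right _ _)
  refine div_le_min_of_mul_le (hkpos i).1 (hsk i) hxkC hskC ?_
  calc γ * Cμ ≤ γ * μk := mul_le_mul_of_nonneg_left hμlb hγ.1.le
    _ ≤ xk i * sk i := hprox i

/-- Lower bounds on feasible iterates: under the hypotheses of the upper-bound lemma,
if additionally `x_kᵢ s_kᵢ ≥ γ μ_k` for all `i` and `μ_k ≥ C_μ > 0`, then
`min_i min(x_kᵢ, s_kᵢ) ≥ γ C_μ / C_max`. -/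
theorem lp_iterates_lower_bound {m n : ℕ} [NeZero n] (A : Matrix (Fin m) (Fin n) ℝ)
    (b : Fin m → ℝ) (c : Fin n → ℝ)
    (x0 xk s0 sk : Fin n → ℝ) (y0 yk : Fin m → ℝ) (μ0 μk γ Cμ Cmax : ℝ)
    (h0pos : ∀ i, 0 < x0 i ∧ 0 < s0 i) (hkpos : ∀ i, 0 < xk i ∧ 0 < sk i)
    (hp0 : A.mulVec x0 = b) (hd0 : A.transpose.mulVec y0 + s0 = c)
    (hpk : A.mulVec xk = b) (hdk : A.transpose.mulVec yk + sk = c)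
    (hμ0 : μ0 = dotProduct x0 s0 / n)
    (hμk : μk = dotProduct xk sk / n)
    (hle : μk ≤ μ0)
    (hγ : 0 < γ ∧ γ < 1)
    (hprox : ∀ i, γ * μk ≤ xk i * sk i)
    (hCμ : 0 < Cμ) (hμlb : Cμ ≤ μk)
    (hCmax : Cmax = max (2 * n * μ0 / Finset.univ.inf' Finset.univ_nonempty s0)
      (2 * n * μ0 / Finset.univ.inf' Finset.univ_nonempty x0)) :
    ∀ i, γ * Cμ / Cmax ≤ min (xk i) (sk i) :=
  lp_iterates_lower_bound_general A b c x0 xk s0 sk y0 yk μ0 μk γ Cμ Cmax h0pos hkpos hp0 hd0 hpk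
    hdk hμ0 hμk hle hγ hprox hμlb hCmax
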